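/- Let s ≥ 3, k ∈ {3,4}, c a nonzero integer, and let 𝒞*(x₂,…,x_s) be an integral cubic form not of the shape a(b₂x₂+⋯+b_sx_s)³ for rationals a, b₂,…,b_s. Let 𝒫(x₁,…,x_s) = c·x₁^k + 𝒞*(x₂,…,x_s), and for d ∈ ℕ let ρ_𝒫(d²) denote the number of x ∈ (ℤ/d²ℤ)^s with 𝒫(x) ≡ 0 (mod d²). Then for every ε > 0 there exists a constant C depending only on 𝒫 and ε such that ρ_𝒫(d²) ≤ C·d^{2s−2+ε} for all squarefree positive integers d. -/
import Mathlib

open MvPolynomial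

section Helpers

/-- Generic fiber-counting bound. -/
lemma card_le_mul_of_fibers {α β : Type*} [Finite α] [Finite β] (f : α → β) (m : ℕ)
    (h : ∀ b : β, Nat.card {a : α // f a = b} ≤ m) :
    Nat.card α ≤ m * Nat.card β := by
  classical
  cases nonempty_fintype α
  cases nonempty_fintype β
  rw [Nat.card_eq_fintype_card, Nat.card_eq_fintype_card]
  calc Fintype.card α = Fintype.card (Σ b : β, {a : α // f a = b}) :=
        (Fintype.card_congr (Equiv.sigmaFiberEquiv f)).symm
    _ = ∑ b : β, Fintype.card {a : α // f a = b} := Fintype.card_sigma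
    _ ≤ ∑ _b : β, m := Finset.sum_le_sum (fun b _ =>
        by have := h b; rwa [Nat.card_eq_fintype_card] at this)
    _ = m * Fintype.card β := by rw [Finset.sum_const, smul_eq_mul, mul_comm]; rfl

/-- Split the cardinality of a finite type by a predicate. -/
lemma card_split {α : Type*} [Finite α] (q : α → Prop) :
    Nat.card α = Nat.card {a : α // q a} + Nat.card {a : α // ¬ q a} := by
  classical
  cases nonempty_fintype α
  rw [Nat.card_eq_fintype_card, Nat.card_eq_fintype_card, Nat.card_eq_fintype_card]
  rw [← Fintype.card_sum]
  exact (Fintype.card_congr (Equiv.sumCompl q)).symm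

/-- Roots of a nonzero polynomial over a field are at most its natDegree. -/
lemma card_poly_roots_le {F : Type*} [Field F] [Fintype F] [DecidableEq F]
    (Q : Polynomial F) (hQ : Q ≠ 0) :
    Nat.card {y : F // Polynomial.eval y Q = 0} ≤ Q.natDegree := by
  classical
  rw [Nat.card_eq_fintype_card, Fintype.card_subtype]
  calc (Finset.univ.filter fun y => Polynomial.eval y Q = 0).card
      ≤ Q.roots.toFinset.card := by
        apply Finset.card_le_card
        intro y hy
        simp only [Finset.mem_filter] at hy
        simp [Multiset.mem_toFinset, Polynomial.mem_roots, hQ, Polynomial.IsRoot, hy.2]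
    _ ≤ Multiset.card Q.roots := Multiset.toFinset_card_le _
    _ ≤ Q.natDegree := Polynomial.card_roots' Q

end Helpers

section ZModHelpers

variable {p : ℕ} (hp : p.Prime)

local notation "π" => ZMod.castHom (dvd_pow_self p two_ne_zero) (ZMod p)

/-- kernel elements of the reduction are multiples of p -/
lemma pi_eq_zero_iff (hp : p.Prime) (z : ZMod (p ^ 2)) :
    (ZMod.castHom (dvd_pow_self p two_ne_zero) (ZMod p)) z = 0 ↔ p ∣ z.val := by
  haveI : NeZero (p ^ 2) := ⟨pow_ne_zero 2 hp.ne_zero⟩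
  rw [ZMod.castHom_apply, ← ZMod.natCast_val, ZMod.natCast_eq_zero_iff]

lemma exists_mul_of_pi_eq_zero (hp : p.Prime) (z : ZMod (p ^ 2))
    (h : (ZMod.castHom (dvd_pow_self p two_ne_zero) (ZMod p)) z = 0) :
    ∃ w : ZMod (p ^ 2), z = (p : ZMod (p ^ 2)) * w := by
  haveI : NeZero (p ^ 2) := ⟨pow_ne_zero 2 hp.ne_zero⟩
  rw [pi_eq_zero_iff hp] at h
  obtain ⟨m, hm⟩ := h
  exact ⟨(m : ZMod (p ^ 2)), by rw [← Nat.cast_mul, ← hm, ZMod.natCast_zmod_val]⟩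

lemma isUnit_of_pi_ne_zero (hp : p.Prime) (z : ZMod (p ^ 2))
    (h : (ZMod.castHom (dvd_pow_self p two_ne_zero) (ZMod p)) z ≠ 0) : IsUnit z := by
  haveI : NeZero (p ^ 2) := ⟨pow_ne_zero 2 hp.ne_zero⟩
  have h' : ¬ p ∣ z.val := fun hd => h ((pi_eq_zero_iff hp z).mpr hd)
  rw [← ZMod.natCast_zmod_val z, ZMod.isUnit_iff_coprime]
  exact ((hp.coprime_iff_not_dvd).mpr h').symm.pow_right 2

/-- each fiber of the reduction `ZMod p² → ZMod p` has at most `p` elements -/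
lemma card_fiber_le (hp : p.Prime) (b : ZMod p) :
    Nat.card {z : ZMod (p ^ 2) // (ZMod.castHom (dvd_pow_self p two_ne_zero) (ZMod p)) z = b}
      ≤ p := by
  haveI : NeZero (p ^ 2) := ⟨pow_ne_zero 2 hp.ne_zero⟩
  haveI : NeZero p := ⟨hp.ne_zero⟩
  have key : Nat.card {z : ZMod (p ^ 2) //
      (ZMod.castHom (dvd_pow_self p two_ne_zero) (ZMod p)) z = b} ≤ Nat.card (ZMod p) := by
    apply Nat.card_le_card_of_injective
      (f := fun z => ((z.val.val / p : ℕ) : ZMod p))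
    rintro ⟨z, hz⟩ ⟨w, hw⟩ hzw
    simp only at hzw
    have hzv : z.val / p < p :=
      Nat.div_lt_of_lt_mul (by rw [← pow_two]; exact ZMod.val_lt z)
    have hwv : w.val / p < p :=
      Nat.div_lt_of_lt_mul (by rw [← pow_two]; exact ZMod.val_lt w)
    have hdiv : z.val / p = w.val / p := by
      have := congrArg ZMod.val hzw
      rwa [ZMod.val_cast_of_lt hzv, ZMod.val_cast_of_lt hwv] at this
    have hmod : z.val % p = w.val % p := by
      have h1 : ((z.val : ℕ) : ZMod p) = ((w.val : ℕ) : ZMod p) := by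
        have hz' : ((z.val : ℕ) : ZMod p) = b := by
          rw [← hz, ZMod.castHom_apply, ← ZMod.natCast_val]
        have hw' : ((w.val : ℕ) : ZMod p) = b := by
          rw [← hw, ZMod.castHom_apply, ← ZMod.natCast_val]
        rw [hz', hw']
      rwa [ZMod.natCast_eq_natCast_iff, Nat.ModEq] at h1
    have : z.val = w.val := by
      have e : p * (z.val / p) + z.val % p = p * (w.val / p) + w.val % p := by
        rw [hdiv, hmod]
      rwa [Nat.div_add_mod, Nat.div_add_mod] at e
    exact Subtype.ext (ZMod.val_injective _ this)
  rwa [Nat.card_zmod] at key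

end ZModHelpers

/-- commuting a ring hom past `aeval` for `ℤ`-polynomials -/
lemma ringHom_aeval_comm {R S : Type*} [CommRing R] [CommRing S] (φ : R →+* S)
    {σ : Type*} (g : σ → R) (q : MvPolynomial σ ℤ) :
    φ (aeval g q) = aeval (fun i => φ (g i)) q := by
  rw [MvPolynomial.map_aeval, MvPolynomial.aeval_def, MvPolynomial.coe_eval₂Hom]
  congr 1
  exact RingHom.ext_int _ _

/-- binomial expansion modulo square-zero elements, for `k = 3, 4` -/
lemma add_pow_of_sq_zero {R : Type*} [CommRing R] (a δ : R) (h : δ * δ = 0)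
    {k : ℕ} (hk : k = 3 ∨ k = 4) :
    (a + δ) ^ k = a ^ k + (k : R) * a ^ (k - 1) * δ := by
  rcases hk with rfl | rfl
  · show (a + δ) ^ 3 = a ^ 3 + ((3 : ℕ) : R) * a ^ 2 * δ
    push_cast
    linear_combination (3 * a + δ) * h
  · show (a + δ) ^ 4 = a ^ 4 + ((4 : ℕ) : R) * a ^ 3 * δ
    push_cast
    linear_combination (6 * a ^ 2 + 4 * a * δ + δ * δ) * h

/-- Claim A: for `t` not divisible by `p`, `c y^k + t = 0` has at most `k` solutions mod `p²`. -/
lemma claimA {p : ℕ} (hp : p.Prime) {c : ℤ} (hpc : ¬ (p : ℤ) ∣ c) {k : ℕ}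
    (hk : k = 3 ∨ k = 4) (hpk : ¬ p ∣ k) (t : ZMod (p ^ 2))
    (ht : (ZMod.castHom (dvd_pow_self p two_ne_zero) (ZMod p)) t ≠ 0) :
    Nat.card {y : ZMod (p ^ 2) // (c : ZMod (p ^ 2)) * y ^ k + t = 0} ≤ k := by
  classical
  haveI : NeZero (p ^ 2) := ⟨pow_ne_zero 2 hp.ne_zero⟩
  haveI : Fact p.Prime := ⟨hp⟩
  set π := ZMod.castHom (dvd_pow_self p two_ne_zero) (ZMod p) with hπ
  have hcF : ((c : ℤ) : ZMod p) ≠ 0 := by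
    rwa [Ne, ZMod.intCast_zmod_eq_zero_iff_dvd]
  have hkF : ((k : ℕ) : ZMod p) ≠ 0 := by
    rwa [Ne, ZMod.natCast_eq_zero_iff]
  have hkne : k ≠ 0 := by rcases hk with rfl | rfl <;> norm_num
  set Q : Polynomial (ZMod p) := Polynomial.C ((c : ℤ) : ZMod p) * Polynomial.X ^ k
      + Polynomial.C (π t) with hQdef
  have hQeval : ∀ z : ZMod p, Polynomial.eval z Q = ((c : ℤ) : ZMod p) * z ^ k + π t := by
    intro z; simp [hQdef]
  have hQcoeff : Q.coeff k = ((c : ℤ) : ZMod p) := by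
    simp [hQdef, Polynomial.coeff_C, hkne]
  have hQ0 : Q ≠ 0 := fun h => hcF (by rw [← hQcoeff, h, Polynomial.coeff_zero])
  have hQdeg : Q.natDegree ≤ k := by
    apply le_trans (Polynomial.natDegree_add_le _ _)
    simp only [max_le_iff]
    exact ⟨le_trans (Polynomial.natDegree_C_mul_le _ _) (by simp), by simp [hkne]⟩
  have hinj : Function.Injective
      (fun y : {y : ZMod (p ^ 2) // (c : ZMod (p ^ 2)) * y ^ k + t = 0} =>
        (⟨π y.val, by
          have h0 := congrArg π y.prop
          rw [map_add, map_mul, map_pow, map_intCast, map_zero] at h0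
          rw [hQeval]; exact h0⟩ :
          {z : ZMod p // Polynomial.eval z Q = 0})) := by
    rintro ⟨y₁, hy₁⟩ ⟨y₂, hy₂⟩ h
    have hred : π y₁ = π y₂ := congrArg Subtype.val h
    have hy₂ne : π y₂ ≠ 0 := by
      intro h0
      apply ht
      have h2 := congrArg π hy₂
      rw [map_add, map_mul, map_pow, map_intCast, map_zero, h0,
        zero_pow hkne, mul_zero, zero_add] at h2
      exact h2
    have hδ : π (y₁ - y₂) = 0 := by rw [map_sub, hred, sub_self]
    have hsq : (y₁ - y₂) * (y₁ - y₂) = 0 := by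
      obtain ⟨w, hw⟩ := exists_mul_of_pi_eq_zero hp _ hδ
      have hpp : (p : ZMod (p ^ 2)) * (p : ZMod (p ^ 2)) = 0 := by
        rw [← Nat.cast_mul, ← pow_two, ZMod.natCast_self]
      rw [hw]
      calc (p : ZMod (p^2)) * w * ((p : ZMod (p^2)) * w)
          = ((p : ZMod (p^2)) * (p : ZMod (p^2))) * (w * w) := by ring
        _ = 0 := by rw [hpp, zero_mul]
    have hexp : y₁ ^ k = y₂ ^ k + (k : ZMod (p ^ 2)) * y₂ ^ (k - 1) * (y₁ - y₂) := by
      have hy : y₁ = y₂ + (y₁ - y₂) := by ring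
      calc y₁ ^ k = (y₂ + (y₁ - y₂)) ^ k := by rw [← hy]
        _ = _ := add_pow_of_sq_zero _ _ hsq hk
    have h1 : (c : ZMod (p ^ 2)) * y₁ ^ k = (c : ZMod (p ^ 2)) * y₂ ^ k := by
      rw [eq_neg_of_add_eq_zero_left hy₁, eq_neg_of_add_eq_zero_left hy₂]
    rw [hexp, mul_add] at h1
    have hzero : (c : ZMod (p ^ 2)) * ((k : ZMod (p ^ 2)) * y₂ ^ (k - 1) * (y₁ - y₂)) = 0 :=
      (left_eq_add.mp h1.symm)
    rw [← mul_assoc] at hzero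
    have hu : IsUnit ((c : ZMod (p ^ 2)) * ((k : ZMod (p ^ 2)) * y₂ ^ (k - 1))) := by
      apply isUnit_of_pi_ne_zero hp
      rw [map_mul, map_mul, map_pow, map_intCast, map_natCast]
      exact mul_ne_zero hcF (mul_ne_zero hkF (pow_ne_zero _ hy₂ne))
    rw [mul_assoc] at hzero
    rw [← mul_assoc] at hzero
    exact Subtype.ext (sub_eq_zero.mp (hu.mul_right_eq_zero.mp hzero))
  exact le_trans (Nat.card_le_card_of_injective _ hinj) (le_trans (card_poly_roots_le Q hQ0) hQdeg)

/-- Schwartz–Zippel, in the form `q * #zeros ≤ deg * q ^ n`. -/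
theorem sz {F : Type*} [Field F] [Fintype F] [DecidableEq F] :
    ∀ (n : ℕ) (f : MvPolynomial (Fin n) F), f ≠ 0 →
      Fintype.card F * Nat.card {x : Fin n → F // eval x f = 0}
        ≤ f.totalDegree * Fintype.card F ^ n := by
  intro n
  induction n with
  | zero =>
    intro f hf
    haveI : IsEmpty {x : Fin 0 → F // eval x f = 0} := by
      constructor
      rintro ⟨x, hx⟩
      rw [eq_C_of_isEmpty f] at hx
      rw [eval_C] at hx
      apply hf
      rw [eq_C_of_isEmpty f, hx, map_zero]
    simp [Nat.card_of_isEmpty]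
  | succ n IH =>
    intro f hf
    set q := Fintype.card F with hq
    set P := finSuccEquiv F n f with hP
    have hP0 : P ≠ 0 := by
      rw [hP]
      intro h
      apply hf
      have h2 := congrArg (finSuccEquiv F n).symm h
      rwa [AlgEquiv.symm_apply_apply, map_zero] at h2
    set e := P.natDegree with he
    set g := P.leadingCoeff with hg
    have hg0 : g ≠ 0 := Polynomial.leadingCoeff_ne_zero.mpr hP0
    have hge : g.totalDegree + e ≤ f.totalDegree := by
      apply totalDegree_coeff_finSuccEquiv_add_le f e
      rw [← hP]
      exact hg0
    -- reformulate solutions via Fin.cons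
    have hcards : Nat.card {x : Fin (n+1) → F // eval x f = 0}
        = Nat.card {v : F × (Fin n → F) // eval (Fin.cons v.1 v.2) f = 0} := by
      apply Nat.card_congr
      apply Equiv.symm
      exact ((Fin.consEquiv (fun _ : Fin (n+1) => F)).subtypeEquiv (fun v => by rfl))
    rw [hcards]
    set Sol := {v : F × (Fin n → F) // eval (Fin.cons v.1 v.2) f = 0} with hSol
    have hsplit := card_split (α := Sol) (fun a => eval a.val.2 g = 0)
    -- part A : g vanishes
    have hA : Nat.card {a : Sol // eval a.val.2 g = 0}
        ≤ q * Nat.card {x' : Fin n → F // eval x' g = 0} := by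
      have hinj : Function.Injective
          (fun a : {a : Sol // eval a.val.2 g = 0} =>
            ((a.val.val.1, ⟨a.val.val.2, a.prop⟩) :
              F × {x' : Fin n → F // eval x' g = 0})) := by
        rintro ⟨⟨⟨a1, a2⟩, ha⟩, ha'⟩ ⟨⟨⟨b1, b2⟩, hb⟩, hb'⟩ hab
        simp only [Prod.mk.injEq, Subtype.mk.injEq] at hab
        exact Subtype.ext (Subtype.ext (Prod.ext hab.1 hab.2))
      calc Nat.card {a : Sol // eval a.val.2 g = 0}
          ≤ Nat.card (F × {x' : Fin n → F // eval x' g = 0}) :=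
            Nat.card_le_card_of_injective _ hinj
        _ = q * Nat.card {x' : Fin n → F // eval x' g = 0} := by
            rw [Nat.card_prod, Nat.card_eq_fintype_card]
    -- part B : g does not vanish
    have hB : Nat.card {a : Sol // ¬ eval a.val.2 g = 0} ≤ e * q ^ n := by
      have := card_le_mul_of_fibers
        (f := fun a : {a : Sol // ¬ eval a.val.2 g = 0} => a.val.val.2) (m := e) ?_
      · calc Nat.card {a : Sol // ¬ eval a.val.2 g = 0}
            ≤ e * Nat.card (Fin n → F) := this
          _ = e * q ^ n := by rw [Nat.card_fun, Nat.card_eq_fintype_card,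
              Nat.card_eq_fintype_card, Fintype.card_fin]
      intro x'
      by_cases hx' : eval x' g = 0
      · haveI : IsEmpty {a : {a : Sol // ¬ eval a.val.2 g = 0} // a.val.val.2 = x'} := by
          constructor
          rintro ⟨⟨⟨⟨v1, v2⟩, hv⟩, hv'⟩, rfl⟩
          exact hv' hx'
        simp [Nat.card_of_isEmpty]
      · set Q := Polynomial.map (eval x') P with hQ
        have hQ0 : Q ≠ 0 := by
          intro h
          apply hx'
          have : Q.coeff e = eval x' g := by
            rw [hQ, Polynomial.coeff_map]
            rfl
          rw [h, Polynomial.coeff_zero] at this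
          exact this.symm
        have hQdeg : Q.natDegree ≤ e := Polynomial.natDegree_map_le
        have hinj : Function.Injective
            (fun a : {a : {a : Sol // ¬ eval a.val.2 g = 0} // a.val.val.2 = x'} =>
              (⟨a.val.val.val.1, by
                have hev := a.val.val.prop
                rw [a.prop] at hev
                rw [hQ, hP, ← eval_eq_eval_mv_eval']
                exact hev⟩ : {y : F // Polynomial.eval y Q = 0})) := by
          rintro ⟨⟨⟨⟨a1, a2⟩, ha⟩, ha'⟩, hax⟩ ⟨⟨⟨⟨b1, b2⟩, hb⟩, hb'⟩, hbx⟩ hval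
          simp only [Subtype.mk.injEq] at hval hax hbx
          apply Subtype.ext
          apply Subtype.ext
          apply Subtype.ext
          exact Prod.ext hval (hax.trans hbx.symm)
        calc Nat.card {a : {a : Sol // ¬ eval a.val.2 g = 0} // a.val.val.2 = x'}
            ≤ Nat.card {y : F // Polynomial.eval y Q = 0} :=
              Nat.card_le_card_of_injective _ hinj
          _ ≤ Q.natDegree := card_poly_roots_le Q hQ0
          _ ≤ e := hQdeg
    -- combine
    have hZg := IH g hg0
    calc q * Nat.card Sol
        = q * Nat.card {a : Sol // eval a.val.2 g = 0}
          + q * Nat.card {a : Sol // ¬ eval a.val.2 g = 0} := by rw [hsplit, Nat.mul_add]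
      _ ≤ q * (q * Nat.card {x' : Fin n → F // eval x' g = 0}) + q * (e * q ^ n) := by
          exact Nat.add_le_add (Nat.mul_le_mul_left _ hA) (Nat.mul_le_mul_left _ hB)
      _ ≤ q * (g.totalDegree * q ^ n) + q * (e * q ^ n) := by
          exact Nat.add_le_add_right (Nat.mul_le_mul_left _ hZg) _
      _ = (g.totalDegree + e) * q ^ (n + 1) := by ring
      _ ≤ f.totalDegree * q ^ (n + 1) := Nat.mul_le_mul_right _ hge

lemma prime_bound (n : ℕ) (hn1 : 1 ≤ n) (k : ℕ) (hk : k = 3 ∨ k = 4) (c : ℤ)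
    (𝒞 : MvPolynomial (Fin n) ℤ) (hhom : 𝒞.IsHomogeneous 3)
    {p : ℕ} (hp : p.Prime) (hpc : ¬ (p : ℤ) ∣ c) (hpk : ¬ p ∣ k)
    (h𝒞p : MvPolynomial.map (Int.castRingHom (ZMod p)) 𝒞 ≠ 0) :
    Nat.card {y : ZMod (p ^ 2) × (Fin n → ZMod (p ^ 2)) //
        (c : ZMod (p ^ 2)) * y.1 ^ k + aeval y.2 𝒞 = 0}
      ≤ (k + 3) * p ^ (2 * n) := by
  classical
  haveI : NeZero (p ^ 2) := ⟨pow_ne_zero 2 hp.ne_zero⟩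
  haveI : Fact p.Prime := ⟨hp⟩
  set π := ZMod.castHom (dvd_pow_self p two_ne_zero) (ZMod p) with hπ
  set 𝒞F := MvPolynomial.map (Int.castRingHom (ZMod p)) 𝒞 with h𝒞F
  have hkne : k ≠ 0 := by rcases hk with rfl | rfl <;> norm_num
  have hcF : ((c : ℤ) : ZMod p) ≠ 0 := by rwa [Ne, ZMod.intCast_zmod_eq_zero_iff_dvd]
  have htd : 𝒞F.totalDegree ≤ 3 := by
    refine le_trans ?_ hhom.totalDegree_le
    rw [h𝒞F, MvPolynomial.totalDegree, MvPolynomial.totalDegree]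
    exact Finset.sup_mono (support_map_subset _ _)
  -- reduction of aeval
  have haux : ∀ v : Fin n → ZMod (p ^ 2),
      π (aeval v 𝒞) = eval (fun i => π (v i)) 𝒞F := by
    intro v
    have hmap : (algebraMap ℤ (ZMod p)) = Int.castRingHom (ZMod p) := RingHom.ext_int _ _
    rw [ringHom_aeval_comm, h𝒞F, eval_map, MvPolynomial.aeval_def, hmap]
  -- Schwartz-Zippel count
  set N₁ := Nat.card {x : Fin n → ZMod p // eval x 𝒞F = 0} with hN₁def
  have hqp : Fintype.card (ZMod p) = p := ZMod.card p
  have hN₁ : N₁ ≤ 3 * p ^ (n - 1) := by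
    have h1 := sz n 𝒞F h𝒞p
    rw [hqp] at h1
    have h2 : p * N₁ ≤ 3 * p ^ n :=
      le_trans h1 (Nat.mul_le_mul_right _ htd)
    have h3 : 3 * p ^ n = p * (3 * p ^ (n - 1)) := by
      calc 3 * p ^ n = 3 * p ^ (1 + (n - 1)) := by rw [show 1 + (n - 1) = n by omega]
        _ = p * (3 * p ^ (n - 1)) := by rw [pow_add, pow_one]; ring
    rw [h3] at h2
    exact Nat.le_of_mul_le_mul_left h2 hp.pos
  set Sol := {y : ZMod (p ^ 2) × (Fin n → ZMod (p ^ 2)) //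
      (c : ZMod (p ^ 2)) * y.1 ^ k + aeval y.2 𝒞 = 0} with hSol
  have hsplit := card_split (α := Sol) (fun a => π (aeval a.val.2 𝒞) = 0)
  -- Part A : value not divisible by p
  have hA : Nat.card {a : Sol // ¬ π (aeval a.val.2 𝒞) = 0} ≤ k * p ^ (2 * n) := by
    have hbound := card_le_mul_of_fibers
      (f := fun a : {a : Sol // ¬ π (aeval a.val.2 𝒞) = 0} => a.val.val.2) (m := k) ?_
    · calc Nat.card {a : Sol // ¬ π (aeval a.val.2 𝒞) = 0}
          ≤ k * Nat.card (Fin n → ZMod (p ^ 2)) := hbound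
        _ = k * p ^ (2 * n) := by
            rw [Nat.card_fun, Nat.card_eq_fintype_card, Nat.card_eq_fintype_card,
              Fintype.card_fin, ZMod.card, ← pow_mul, mul_comm 2 n]
    intro x
    by_cases hx : π (aeval x 𝒞) = 0
    · haveI : IsEmpty {a : {a : Sol // ¬ π (aeval a.val.2 𝒞) = 0} // a.val.val.2 = x} := by
        constructor
        rintro ⟨⟨⟨⟨y1, y2⟩, hy⟩, hy'⟩, rfl⟩
        exact hy' hx
      simp [Nat.card_of_isEmpty]
    · have hinj : Function.Injective
          (fun a : {a : {a : Sol // ¬ π (aeval a.val.2 𝒞) = 0} // a.val.val.2 = x} =>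
            (⟨a.val.val.val.1, by
              have hev := a.val.val.prop
              rw [show a.val.val.val.2 = x from a.prop] at hev
              exact hev⟩ :
              {y : ZMod (p ^ 2) // (c : ZMod (p ^ 2)) * y ^ k + aeval x 𝒞 = 0})) := by
        rintro ⟨⟨⟨⟨a1, a2⟩, ha⟩, ha'⟩, hax⟩ ⟨⟨⟨⟨b1, b2⟩, hb⟩, hb'⟩, hbx⟩ hval
        simp only [Subtype.mk.injEq] at hval hax hbx
        apply Subtype.ext; apply Subtype.ext; apply Subtype.ext
        exact Prod.ext hval (hax.trans hbx.symm)
      calc Nat.card {a : {a : Sol // ¬ π (aeval a.val.2 𝒞) = 0} // a.val.val.2 = x}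
          ≤ Nat.card {y : ZMod (p ^ 2) // (c : ZMod (p ^ 2)) * y ^ k + aeval x 𝒞 = 0} :=
            Nat.card_le_card_of_injective _ hinj
        _ ≤ k := claimA hp hpc hk hpk _ hx
  -- Part B : value divisible by p
  have hB : Nat.card {a : Sol // π (aeval a.val.2 𝒞) = 0} ≤ 3 * p ^ (2 * n) := by
    set X₀ := {x : Fin n → ZMod (p ^ 2) // eval (fun i => π (x i)) 𝒞F = 0} with hX₀
    have hinj : Function.Injective
        (fun a : {a : Sol // π (aeval a.val.2 𝒞) = 0} =>
          ((⟨a.val.val.1, by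
              have hev := a.val.prop
              have hred := congrArg π hev
              rw [map_add, map_mul, map_pow, map_intCast, map_zero, a.prop, add_zero] at hred
              have hzk : (π a.val.val.1) ^ k = 0 := by
                rcases mul_eq_zero.mp hred with h | h
                · exact absurd h hcF
                · exact h
              exact pow_eq_zero_iff hkne |>.mp hzk⟩ :
            {z : ZMod (p ^ 2) // π z = 0}),
          (⟨a.val.val.2, by rw [← haux]; exact a.prop⟩ : X₀))) := by
      rintro ⟨⟨⟨a1, a2⟩, ha⟩, ha'⟩ ⟨⟨⟨b1, b2⟩, hb⟩, hb'⟩ hval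
      simp only [Prod.mk.injEq, Subtype.mk.injEq] at hval
      apply Subtype.ext; apply Subtype.ext
      exact Prod.ext hval.1 hval.2
    have hX₀card : Nat.card X₀ ≤ p ^ n * N₁ := by
      have hb := card_le_mul_of_fibers
        (f := fun x : X₀ => (⟨fun i => π (x.val i), x.prop⟩ :
          {x : Fin n → ZMod p // eval x 𝒞F = 0})) (m := p ^ n) ?_
      · exact hb
      intro z
      have hfinj : Function.Injective
          (fun x : {x : X₀ // (⟨fun i => π (x.val i), x.prop⟩ :
              {x : Fin n → ZMod p // eval x 𝒞F = 0}) = z} =>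
            (fun i => (⟨x.val.val i, by
              have := congrFun (congrArg Subtype.val x.prop) i
              exact this⟩ : {w : ZMod (p ^ 2) // π w = z.val i})
              : ∀ i : Fin n, {w : ZMod (p ^ 2) // π w = z.val i})) := by
        rintro ⟨⟨x1, hx1⟩, hx1'⟩ ⟨⟨x2, hx2⟩, hx2'⟩ hval
        apply Subtype.ext; apply Subtype.ext
        funext i
        exact congrArg Subtype.val (congrFun hval i)
      calc Nat.card {x : X₀ // (⟨fun i => π (x.val i), x.prop⟩ :
              {x : Fin n → ZMod p // eval x 𝒞F = 0}) = z}
          ≤ Nat.card (∀ i : Fin n, {w : ZMod (p ^ 2) // π w = z.val i}) :=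
            Nat.card_le_card_of_injective _ hfinj
        _ = ∏ i : Fin n, Nat.card {w : ZMod (p ^ 2) // π w = z.val i} := Nat.card_pi
        _ ≤ ∏ _i : Fin n, p := Finset.prod_le_prod' (fun i _ => card_fiber_le hp _)
        _ = p ^ n := by rw [Finset.prod_const, Finset.card_univ, Fintype.card_fin]
    calc Nat.card {a : Sol // π (aeval a.val.2 𝒞) = 0}
        ≤ Nat.card ({z : ZMod (p ^ 2) // π z = 0} × X₀) :=
          Nat.card_le_card_of_injective _ hinj
      _ = Nat.card {z : ZMod (p ^ 2) // π z = 0} * Nat.card X₀ := Nat.card_prod _ _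
      _ ≤ p * (p ^ n * N₁) :=
          Nat.mul_le_mul (card_fiber_le hp 0) hX₀card
      _ ≤ p * (p ^ n * (3 * p ^ (n - 1))) :=
          Nat.mul_le_mul_left _ (Nat.mul_le_mul_left _ hN₁)
      _ = 3 * p ^ (2 * n) := by
          calc p * (p ^ n * (3 * p ^ (n - 1)))
              = 3 * (p ^ 1 * p ^ n * p ^ (n - 1)) := by rw [pow_one]; ring
            _ = 3 * p ^ (1 + n + (n - 1)) := by rw [pow_add, pow_add]
            _ = 3 * p ^ (2 * n) := by rw [show 1 + n + (n - 1) = 2 * n by omega]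
  calc Nat.card Sol
      = Nat.card {a : Sol // π (aeval a.val.2 𝒞) = 0}
        + Nat.card {a : Sol // ¬ π (aeval a.val.2 𝒞) = 0} := hsplit
    _ ≤ 3 * p ^ (2 * n) + k * p ^ (2 * n) := Nat.add_le_add hB hA
    _ = (k + 3) * p ^ (2 * n) := by ring

/-- CRT-style injectivity of the pair of casts. -/
lemma zmod_cast_pair_inj {M a b : ℕ} [NeZero M] (hab : a * b = M) (hco : Nat.Coprime a b)
    (hdA : a ∣ M) (hdB : b ∣ M) {y z : ZMod M}
    (h1 : ZMod.castHom hdA (ZMod a) y = ZMod.castHom hdA (ZMod a) z)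
    (h2 : ZMod.castHom hdB (ZMod b) y = ZMod.castHom hdB (ZMod b) z) : y = z := by
  have ha0 : a ≠ 0 := by rintro rfl; simp at hab; exact NeZero.ne M hab.symm
  have hb0 : b ≠ 0 := by rintro rfl; simp at hab; exact NeZero.ne M hab.symm
  have key : ∀ w : ZMod M, ZMod.castHom hdA (ZMod a) w = 0 → ZMod.castHom hdB (ZMod b) w = 0
      → w = 0 := by
    intro w hwa hwb
    rw [ZMod.castHom_apply, ← ZMod.natCast_val, ZMod.natCast_eq_zero_iff] at hwa hwb
    have hdvd : M ∣ w.val := by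
      have h' : a * b ∣ w.val := Nat.Coprime.mul_dvd_of_dvd_of_dvd hco hwa hwb
      rwa [hab] at h'
    have hv0 := Nat.eq_zero_of_dvd_of_lt hdvd (ZMod.val_lt w)
    rw [← ZMod.natCast_zmod_val w, hv0, Nat.cast_zero]
  have := key (y - z) (by rw [map_sub, h1, sub_self]) (by rw [map_sub, h2, sub_self])
  exact sub_eq_zero.mp this

/-- multiplicativity (as an inequality) of the solution count. -/
lemma count_mul_le (n : ℕ) (k : ℕ) (c : ℤ) (𝒞 : MvPolynomial (Fin n) ℤ)
    (a b : ℕ) (ha : 0 < a) (hb : 0 < b) (hco : Nat.Coprime a b) :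
    Nat.card {y : ZMod ((a * b) ^ 2) × (Fin n → ZMod ((a * b) ^ 2)) //
        (c : ZMod ((a * b) ^ 2)) * y.1 ^ k + aeval y.2 𝒞 = 0}
    ≤ Nat.card {y : ZMod (a ^ 2) × (Fin n → ZMod (a ^ 2)) //
        (c : ZMod (a ^ 2)) * y.1 ^ k + aeval y.2 𝒞 = 0}
    * Nat.card {y : ZMod (b ^ 2) × (Fin n → ZMod (b ^ 2)) //
        (c : ZMod (b ^ 2)) * y.1 ^ k + aeval y.2 𝒞 = 0} := by
  classical
  haveI : NeZero ((a * b) ^ 2) := ⟨pow_ne_zero 2 (Nat.mul_ne_zero ha.ne' hb.ne')⟩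
  haveI : NeZero (a ^ 2) := ⟨pow_ne_zero 2 ha.ne'⟩
  haveI : NeZero (b ^ 2) := ⟨pow_ne_zero 2 hb.ne'⟩
  have hdA : a ^ 2 ∣ (a * b) ^ 2 := pow_dvd_pow_of_dvd (dvd_mul_right a b) 2
  have hdB : b ^ 2 ∣ (a * b) ^ 2 := pow_dvd_pow_of_dvd (dvd_mul_left b a) 2
  set φA := ZMod.castHom hdA (ZMod (a ^ 2)) with hφA
  set φB := ZMod.castHom hdB (ZMod (b ^ 2)) with hφB
  have hsolA : ∀ (y : ZMod ((a * b) ^ 2) × (Fin n → ZMod ((a * b) ^ 2))),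
      (c : ZMod ((a * b) ^ 2)) * y.1 ^ k + aeval y.2 𝒞 = 0 →
      (c : ZMod (a ^ 2)) * (φA y.1) ^ k + aeval (fun i => φA (y.2 i)) 𝒞 = 0 := by
    intro y hy
    have := congrArg φA hy
    rwa [map_add, map_mul, map_pow, map_intCast, map_zero, ringHom_aeval_comm] at this
  have hsolB : ∀ (y : ZMod ((a * b) ^ 2) × (Fin n → ZMod ((a * b) ^ 2))),
      (c : ZMod ((a * b) ^ 2)) * y.1 ^ k + aeval y.2 𝒞 = 0 →
      (c : ZMod (b ^ 2)) * (φB y.1) ^ k + aeval (fun i => φB (y.2 i)) 𝒞 = 0 := by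
    intro y hy
    have := congrArg φB hy
    rwa [map_add, map_mul, map_pow, map_intCast, map_zero, ringHom_aeval_comm] at this
  have hinj : Function.Injective
      (fun y : {y : ZMod ((a * b) ^ 2) × (Fin n → ZMod ((a * b) ^ 2)) //
          (c : ZMod ((a * b) ^ 2)) * y.1 ^ k + aeval y.2 𝒞 = 0} =>
        ((⟨(φA y.val.1, fun i => φA (y.val.2 i)), hsolA y.val y.prop⟩ :
            {y : ZMod (a ^ 2) × (Fin n → ZMod (a ^ 2)) //
              (c : ZMod (a ^ 2)) * y.1 ^ k + aeval y.2 𝒞 = 0}),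
         (⟨(φB y.val.1, fun i => φB (y.val.2 i)), hsolB y.val y.prop⟩ :
            {y : ZMod (b ^ 2) × (Fin n → ZMod (b ^ 2)) //
              (c : ZMod (b ^ 2)) * y.1 ^ k + aeval y.2 𝒞 = 0}))) := by
    have hab2 : a ^ 2 * b ^ 2 = (a * b) ^ 2 := (mul_pow a b 2).symm
    have hco2 : Nat.Coprime (a ^ 2) (b ^ 2) := Nat.Coprime.pow 2 2 hco
    rintro ⟨⟨y1, y2⟩, hy⟩ ⟨⟨z1, z2⟩, hz⟩ hval
    simp only [Prod.mk.injEq, Subtype.mk.injEq] at hval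
    obtain ⟨⟨hA1, hA2⟩, ⟨hB1, hB2⟩⟩ := hval
    apply Subtype.ext
    apply Prod.ext
    · exact zmod_cast_pair_inj hab2 hco2 hdA hdB hA1 hB1
    · funext i
      exact zmod_cast_pair_inj hab2 hco2 hdA hdB (congrFun hA2 i) (congrFun hB2 i)
  calc Nat.card {y : ZMod ((a * b) ^ 2) × (Fin n → ZMod ((a * b) ^ 2)) //
          (c : ZMod ((a * b) ^ 2)) * y.1 ^ k + aeval y.2 𝒞 = 0}
      ≤ Nat.card ({y : ZMod (a ^ 2) × (Fin n → ZMod (a ^ 2)) //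
          (c : ZMod (a ^ 2)) * y.1 ^ k + aeval y.2 𝒞 = 0}
        × {y : ZMod (b ^ 2) × (Fin n → ZMod (b ^ 2)) //
          (c : ZMod (b ^ 2)) * y.1 ^ k + aeval y.2 𝒞 = 0}) :=
        Nat.card_le_card_of_injective _ hinj
    _ = _ := Nat.card_prod _ _

section Assembly
variable (n k : ℕ) (c : ℤ) (𝒞 : MvPolynomial (Fin n) ℤ)

/-- trivial bound : count at most the whole space -/
lemma count_trivial (d : ℕ) (hd : 0 < d) :
    Nat.card {y : ZMod (d ^ 2) × (Fin n → ZMod (d ^ 2)) //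
        (c : ZMod (d ^ 2)) * y.1 ^ k + aeval y.2 𝒞 = 0}
      ≤ d ^ 2 * d ^ (2 * n) := by
  haveI : NeZero (d ^ 2) := ⟨pow_ne_zero 2 hd.ne'⟩
  calc Nat.card {y : ZMod (d ^ 2) × (Fin n → ZMod (d ^ 2)) //
        (c : ZMod (d ^ 2)) * y.1 ^ k + aeval y.2 𝒞 = 0}
      ≤ Nat.card (ZMod (d ^ 2) × (Fin n → ZMod (d ^ 2))) :=
        Nat.card_le_card_of_injective _ Subtype.val_injective
    _ = d ^ 2 * d ^ (2 * n) := by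
        rw [Nat.card_prod, Nat.card_fun, Nat.card_zmod, Nat.card_eq_fintype_card,
          Fintype.card_fin, ← pow_mul]

lemma count_squarefree (A : ℕ → ℕ)
    (hA : ∀ p : ℕ, p.Prime →
      Nat.card {y : ZMod (p ^ 2) × (Fin n → ZMod (p ^ 2)) //
        (c : ZMod (p ^ 2)) * y.1 ^ k + aeval y.2 𝒞 = 0} ≤ A p * p ^ (2 * n)) :
    ∀ d : ℕ, 0 < d → Squarefree d →
      Nat.card {y : ZMod (d ^ 2) × (Fin n → ZMod (d ^ 2)) //
        (c : ZMod (d ^ 2)) * y.1 ^ k + aeval y.2 𝒞 = 0}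
      ≤ (∏ p ∈ d.primeFactors, A p) * d ^ (2 * n) := by
  intro d
  induction d using Nat.strong_induction_on with
  | _ d IH =>
    intro hd hsq
    by_cases hd1 : d = 1
    · subst hd1
      simp only [Nat.primeFactors_one, Finset.prod_empty, one_mul, one_pow]
      have := count_trivial n k c 𝒞 1 one_pos
      simpa using this
    · set p := d.minFac with hpdef
      have hp : p.Prime := Nat.minFac_prime hd1
      set m := d / p with hmdef
      have hm : p * m = d := Nat.mul_div_cancel' d.minFac_dvd
      have hm0 : 0 < m := by
        rcases Nat.eq_zero_or_pos m with h | h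
        · rw [h, mul_zero] at hm; omega
        · exact h
      have hmd : m < d := by
        rw [← hm]
        have := hp.one_lt
        nlinarith
      have hsqm : Squarefree m := hsq.squarefree_of_dvd (Nat.div_dvd_of_dvd d.minFac_dvd)
      have hpm : ¬ p ∣ m := by
        intro hdvd
        have : p * p ∣ d := by
          rw [← hm]
          exact mul_dvd_mul_left p hdvd
        exact Nat.Prime.one_lt hp |>.ne' (Nat.isUnit_iff.mp (hsq p this))
      have hco : p.Coprime m := (hp.coprime_iff_not_dvd).mpr hpm
      have hppf : d.primeFactors = {p} ∪ m.primeFactors := by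
        rw [← hm, Nat.primeFactors_mul hp.ne_zero hm0.ne', hp.primeFactors]
      have hpnot : p ∉ m.primeFactors := fun h => hpm (Nat.dvd_of_mem_primeFactors h)
      have hprod : ∏ q ∈ d.primeFactors, A q = A p * ∏ q ∈ m.primeFactors, A q := by
        rw [hppf, Finset.prod_union (Finset.disjoint_singleton_left.mpr hpnot),
          Finset.prod_singleton]
      rw [hprod, ← hm]
      calc Nat.card {y : ZMod ((p * m) ^ 2) × (Fin n → ZMod ((p * m) ^ 2)) //
            (c : ZMod ((p * m) ^ 2)) * y.1 ^ k + aeval y.2 𝒞 = 0}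
          ≤ Nat.card {y : ZMod (p ^ 2) × (Fin n → ZMod (p ^ 2)) //
              (c : ZMod (p ^ 2)) * y.1 ^ k + aeval y.2 𝒞 = 0}
            * Nat.card {y : ZMod (m ^ 2) × (Fin n → ZMod (m ^ 2)) //
              (c : ZMod (m ^ 2)) * y.1 ^ k + aeval y.2 𝒞 = 0} :=
            count_mul_le n k c 𝒞 p m hp.pos hm0 hco
        _ ≤ (A p * p ^ (2 * n)) * ((∏ q ∈ m.primeFactors, A q) * m ^ (2 * n)) :=
            Nat.mul_le_mul (hA p hp) (IH m hmd hm0 hsqm)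
        _ = (A p * ∏ q ∈ m.primeFactors, A q) * (p * m) ^ (2 * n) := by
            rw [mul_pow]; ring

end Assembly

/-- **Lemma 5, second bound.**
For `𝓟(x) = c x₁^k + 𝒞*(x₂,…,x_s)` with `k ∈ {3,4}`, `c ≠ 0` and `𝒞*` a non-degenerate
integral cubic form, one has `ρ_𝓟(d²) ≪_ε d^(2s-2+ε)` for all squarefree `d`. -/
theorem rho_squarefree_sq_bound (s : ℕ) (hs : 3 ≤ s) (k : ℕ) (hk : k = 3 ∨ k = 4)
    (c : ℤ) (hc : c ≠ 0)
    (𝒞 : MvPolynomial (Fin (s - 1)) ℤ) (hhom : 𝒞.IsHomogeneous 3)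
    (hdeg : ¬ ∃ (a : ℚ) (b : Fin (s - 1) → ℚ),
      MvPolynomial.map (Int.castRingHom ℚ) 𝒞 =
        MvPolynomial.C a * (∑ i, MvPolynomial.C (b i) * MvPolynomial.X i) ^ 3)
    (ε : ℝ) (hε : 0 < ε) :
    ∃ K : ℝ, ∀ d : ℕ, 0 < d → Squarefree d →
      (Nat.card {y : ZMod (d ^ 2) × (Fin (s - 1) → ZMod (d ^ 2)) //
          (c : ZMod (d ^ 2)) * y.1 ^ k + aeval y.2 𝒞 = 0} : ℝ)
        ≤ K * (d : ℝ) ^ (2 * (s : ℝ) - 2 + ε) := by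
  classical
  -- 𝒞 is nonzero
  have h𝒞0 : 𝒞 ≠ 0 := by
    intro h
    exact hdeg ⟨0, 0, by simp [h]⟩
  obtain ⟨m₀, hm₀⟩ : ∃ m₀, 𝒞.coeff m₀ ≠ 0 := by
    rwa [MvPolynomial.ne_zero_iff] at h𝒞0
  set M : ℤ := c * 𝒞.coeff m₀ * 12 with hMdef
  have hM0 : M ≠ 0 := mul_ne_zero (mul_ne_zero hc hm₀) (by norm_num)
  set Bad : Finset ℕ := M.natAbs.primeFactors with hBad
  -- good primes behave well
  have hgood : ∀ p : ℕ, p.Prime → p ∉ Bad →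
      (¬ (p : ℤ) ∣ c) ∧ (¬ p ∣ k) ∧ MvPolynomial.map (Int.castRingHom (ZMod p)) 𝒞 ≠ 0 := by
    intro p hp hpB
    haveI : NeZero p := ⟨hp.ne_zero⟩
    have hpM : ¬ (p : ℤ) ∣ M := by
      intro h
      apply hpB
      rw [hBad, Nat.mem_primeFactors]
      refine ⟨hp, ?_, Int.natAbs_ne_zero.mpr hM0⟩
      rw [← Int.natAbs_natCast p]
      exact Int.natAbs_dvd_natAbs.mpr h
    refine ⟨fun h => hpM (h.trans ((dvd_mul_right c _).trans (dvd_mul_right _ 12))), ?_, ?_⟩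
    · intro h
      apply hpM
      have hk12 : (k : ℤ) ∣ 12 := by rcases hk with rfl | rfl <;> norm_num
      have : (p : ℤ) ∣ 12 := (Int.natCast_dvd_natCast.mpr h).trans hk12
      exact this.trans (dvd_mul_left 12 _)
    · intro h
      apply hpM
      have hcoeff : ((𝒞.coeff m₀ : ℤ) : ZMod p) = 0 := by
        have := congrArg (fun q => MvPolynomial.coeff m₀ q) h
        simpa [MvPolynomial.coeff_map] using this
      have : (p : ℤ) ∣ 𝒞.coeff m₀ := (ZMod.intCast_zmod_eq_zero_iff_dvd _ _).mp hcoeff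
      exact this.trans ((dvd_mul_left _ c).trans (dvd_mul_right _ 12))
  -- the per-prime constant
  set A : ℕ → ℕ := fun p => if p ∈ Bad then p ^ 2 else (k + 3) with hA
  have hAbound : ∀ p : ℕ, p.Prime →
      Nat.card {y : ZMod (p ^ 2) × (Fin (s - 1) → ZMod (p ^ 2)) //
        (c : ZMod (p ^ 2)) * y.1 ^ k + aeval y.2 𝒞 = 0} ≤ A p * p ^ (2 * (s - 1)) := by
    intro p hp
    by_cases hpB : p ∈ Bad
    · simpa [hA, hpB] using count_trivial (s - 1) k c 𝒞 p hp.pos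
    · obtain ⟨h1, h2, h3⟩ := hgood p hp hpB
      simpa [hA, hpB] using prime_bound (s - 1) (by omega) k hk c 𝒞 hhom hp h1 h2 h3
  -- choose the threshold P₀ and constant K
  set P₀ : ℕ := ⌈(7 : ℝ) ^ (ε⁻¹)⌉₊ with hP₀
  have hP₀prop : ∀ p : ℕ, P₀ ≤ p → (7 : ℝ) ≤ (p : ℝ) ^ ε := by
    intro p hp
    have h1 : (7 : ℝ) ^ (ε⁻¹) ≤ (p : ℝ) := le_trans (Nat.le_ceil _) (by exact_mod_cast hp)
    calc (7 : ℝ) = ((7 : ℝ) ^ (ε⁻¹)) ^ ε := by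
          rw [← Real.rpow_mul (by norm_num), inv_mul_cancel₀ hε.ne', Real.rpow_one]
      _ ≤ (p : ℝ) ^ ε := Real.rpow_le_rpow (Real.rpow_nonneg (by norm_num) _) h1 hε.le
  refine ⟨((∏ q ∈ Bad, q ^ 2 : ℕ) : ℝ) * 7 ^ P₀, ?_⟩
  intro d hd hsq
  -- natural number bound
  have hnat := count_squarefree (s - 1) k c 𝒞 A hAbound d hd hsq
  -- the real prod bound
  set S := d.primeFactors with hS
  have hprodA : (∏ p ∈ S, (A p : ℝ)) ≤
      (((∏ q ∈ Bad, q ^ 2 : ℕ) : ℝ) * 7 ^ P₀) * (d : ℝ) ^ ε := by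
    have hstep : ∀ p ∈ S, (A p : ℝ) ≤
        (((if p ∈ Bad then p ^ 2 else 1 : ℕ) : ℝ) * (if p < P₀ then (7 : ℝ) else 1))
          * (p : ℝ) ^ ε := by
      intro p hpS
      have hp : p.Prime := Nat.prime_of_mem_primeFactors hpS
      have hp1 : (1 : ℝ) ≤ (p : ℝ) := by exact_mod_cast hp.one_lt.le
      have hpε : (1 : ℝ) ≤ (p : ℝ) ^ ε := Real.one_le_rpow hp1 hε.le
      have hk7 : ((k : ℝ) + 3) ≤ 7 := by rcases hk with rfl | rfl <;> norm_num
      by_cases hpB : p ∈ Bad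
      · simp only [hA, hpB, if_true]
        push_cast
        by_cases hpP : p < P₀ <;> simp only [hpP, if_true, if_false] <;> nlinarith
      · simp only [hA, hpB, if_false]
        by_cases hpP : p < P₀
        · simp only [hpP, if_true]
          push_cast
          nlinarith
        · simp only [hpP, if_false]
          push_cast
          have h7 : (7 : ℝ) ≤ (p : ℝ) ^ ε := hP₀prop p (by omega)
          nlinarith
    calc ∏ p ∈ S, (A p : ℝ)
        ≤ ∏ p ∈ S, ((((if p ∈ Bad then p ^ 2 else 1 : ℕ) : ℝ))
              * (if p < P₀ then (7 : ℝ) else 1)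
            * (p : ℝ) ^ ε) :=
          Finset.prod_le_prod (fun p _ => by positivity) hstep
      _ = ((∏ p ∈ S, (((if p ∈ Bad then p ^ 2 else 1 : ℕ) : ℝ)))
            * (∏ p ∈ S, (if p < P₀ then (7 : ℝ) else 1)))
          * ∏ p ∈ S, (p : ℝ) ^ ε := by rw [Finset.prod_mul_distrib, Finset.prod_mul_distrib]
      _ ≤ (((∏ q ∈ Bad, q ^ 2 : ℕ) : ℝ) * 7 ^ P₀) * (d : ℝ) ^ ε := by
          have hfac1nat : (∏ p ∈ S, (if p ∈ Bad then p ^ 2 else 1))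
              ≤ ∏ q ∈ Bad, q ^ 2 := by
            rw [Finset.prod_ite_mem S Bad (fun q => q ^ 2)]
            apply Finset.prod_le_prod_of_subset_of_one_le' Finset.inter_subset_right
            intro q hqB _
            have h2q : 2 ≤ q := (Nat.prime_of_mem_primeFactors hqB).two_le
            nlinarith
          have hfac1 : (∏ p ∈ S, (((if p ∈ Bad then p ^ 2 else 1 : ℕ) : ℝ)))
              ≤ ((∏ q ∈ Bad, q ^ 2 : ℕ) : ℝ) := by
            rw [← Nat.cast_prod]
            exact_mod_cast hfac1nat
          have hfac2 : (∏ p ∈ S, (if p < P₀ then (7 : ℝ) else 1)) ≤ 7 ^ P₀ := by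
            rw [← Finset.prod_filter]
            rw [Finset.prod_const]
            apply pow_le_pow_right₀ (by norm_num)
            calc (S.filter (fun p => p < P₀)).card ≤ (Finset.range P₀).card :=
                  Finset.card_le_card (fun q hq => by
                    simp only [Finset.mem_filter] at hq
                    exact Finset.mem_range.mpr hq.2)
              _ = P₀ := Finset.card_range P₀
          have hfac3 : ∏ p ∈ S, (p : ℝ) ^ ε = (d : ℝ) ^ ε := by
            rw [Real.finset_prod_rpow S _ (fun p _ => by positivity) ε]
            congr 1
            rw [← Nat.cast_prod]
            congr 1
            exact Nat.prod_primeFactors_of_squarefree hsq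
          rw [hfac3]
          apply mul_le_mul_of_nonneg_right _ (by positivity)
          exact mul_le_mul hfac1 hfac2 (by positivity) (by positivity)
  -- put everything together
  have hcast : (Nat.card {y : ZMod (d ^ 2) × (Fin (s - 1) → ZMod (d ^ 2)) //
      (c : ZMod (d ^ 2)) * y.1 ^ k + aeval y.2 𝒞 = 0} : ℝ)
      ≤ (∏ p ∈ S, (A p : ℝ)) * (d : ℝ) ^ (2 * (s - 1) : ℕ) := by
    have := hnat
    have h2 : ((∏ p ∈ d.primeFactors, A p) * d ^ (2 * (s - 1)) : ℕ) =
        ((∏ p ∈ d.primeFactors, A p : ℕ) : ℝ) * (d : ℝ) ^ (2 * (s - 1) : ℕ) := by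
      push_cast
      ring
    calc (Nat.card {y : ZMod (d ^ 2) × (Fin (s - 1) → ZMod (d ^ 2)) //
          (c : ZMod (d ^ 2)) * y.1 ^ k + aeval y.2 𝒞 = 0} : ℝ)
        ≤ ((∏ p ∈ d.primeFactors, A p) * d ^ (2 * (s - 1)) : ℕ) := by exact_mod_cast hnat
      _ = ((∏ p ∈ d.primeFactors, A p : ℕ) : ℝ) * (d : ℝ) ^ (2 * (s - 1) : ℕ) := h2
      _ = (∏ p ∈ S, (A p : ℝ)) * (d : ℝ) ^ (2 * (s - 1) : ℕ) := by
          rw [Nat.cast_prod]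
  have hdpos : (0 : ℝ) < (d : ℝ) := by exact_mod_cast hd
  have hexp : (d : ℝ) ^ (2 * (s - 1) : ℕ) * (d : ℝ) ^ ε = (d : ℝ) ^ (2 * (s : ℝ) - 2 + ε) := by
    rw [← Real.rpow_natCast (d : ℝ) (2 * (s - 1)), ← Real.rpow_add hdpos]
    congr 1
    have : ((2 * (s - 1) : ℕ) : ℝ) = 2 * (s : ℝ) - 2 := by
      push_cast [Nat.cast_sub (by omega : 1 ≤ s)]
      ring
    rw [this]
  calc (Nat.card {y : ZMod (d ^ 2) × (Fin (s - 1) → ZMod (d ^ 2)) //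
        (c : ZMod (d ^ 2)) * y.1 ^ k + aeval y.2 𝒞 = 0} : ℝ)
      ≤ (∏ p ∈ S, (A p : ℝ)) * (d : ℝ) ^ (2 * (s - 1) : ℕ) := hcast
    _ ≤ ((((∏ q ∈ Bad, q ^ 2 : ℕ) : ℝ) * 7 ^ P₀) * (d : ℝ) ^ ε) * (d : ℝ) ^ (2 * (s - 1) : ℕ) :=
        mul_le_mul_of_nonneg_right hprodA (by positivity)
    _ = (((∏ q ∈ Bad, q ^ 2 : ℕ) : ℝ) * 7 ^ P₀) * ((d : ℝ) ^ (2 * (s - 1) : ℕ) * (d : ℝ) ^ ε) := by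
        ring
    _ = (((∏ q ∈ Bad, q ^ 2 : ℕ) : ℝ) * 7 ^ P₀) * (d : ℝ) ^ (2 * (s : ℝ) - 2 + ε) := by
        rw [hexp]
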